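/- Let H be a complex Hilbert space, let Ω be a bounded selfadjoint positive operator on H which is bijective with bounded inverse Ω⁻¹, and let T be a selfadjoint (densely defined) operator in H with domain D. Then the operator S with domain Ω(D) := { Ω x : x ∈ D } defined by S(Ω x) = Ω⁻¹(T x) (i.e. S = Ω⁻¹ ∘ T ∘ Ω⁻¹) is selfadjoint. -/

import Mathlib

/-!
Since `Ω` is selfadjoint, so is `Ω⁻¹`, and moving both factors `Ω⁻¹` across the inner product
shows that the adjoint of `Ω⁻¹ T Ω⁻¹` is `Ω⁻¹ T* Ω⁻¹` whenever `T` is densely defined. The only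
nontrivial inclusion is `dom S* ⊆ Ω (dom T*)`: for `y ∈ dom S*` the vector `Ω (S* y)` witnesses
`Ω⁻¹ y ∈ dom T*`, because `Ω` maps `dom T` onto `dom S`.
-/

open scoped InnerProductSpace

/-- The composition `S ∘ B` of a partially defined operator `S` with an everywhere-defined
linear map `B`, with domain `{x | B x ∈ dom S}`. -/
noncomputable def pmapCompLM {𝕜 H₁ H₂ H₃ : Type*} [RCLike 𝕜]
    [NormedAddCommGroup H₁] [InnerProductSpace 𝕜 H₁]
    [NormedAddCommGroup H₂] [InnerProductSpace 𝕜 H₂]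
    [NormedAddCommGroup H₃] [InnerProductSpace 𝕜 H₃]
    (S : H₂ →ₗ.[𝕜] H₃) (B : H₁ →ₗ[𝕜] H₂) : H₁ →ₗ.[𝕜] H₃ where
  domain := S.domain.comap B
  toFun := S.toFun.comp (B.restrict fun _ hx => hx)

/-- The operator `Ω⁻¹ ∘ T ∘ Ω⁻¹` for a continuous linear equivalence `Ω` and a partially
defined operator `T`; its domain is `{x | Ω⁻¹ x ∈ dom T} = Ω (dom T)`. -/
noncomputable def conjOp {H : Type*} [NormedAddCommGroup H] [InnerProductSpace ℂ H]
    (Ω : H ≃L[ℂ] H) (T : H →ₗ.[ℂ] H) : H →ₗ.[ℂ] H :=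
  (((Ω.symm : H →L[ℂ] H)) : H →ₗ[ℂ] H).compPMap
    (pmapCompLM T (((Ω.symm : H →L[ℂ] H)) : H →ₗ[ℂ] H))

theorem ContinuousLinearEquiv.inner_symm_apply_of_isSymmetric {𝕜 E : Type*} [RCLike 𝕜]
    [NormedAddCommGroup E] [InnerProductSpace 𝕜 E] {e : E ≃L[𝕜] E}
    (he : (e : E →ₗ[𝕜] E).IsSymmetric) (x y : E) :
    ⟪e.symm x, y⟫_𝕜 = ⟪x, e.symm y⟫_𝕜 := by
  calc ⟪e.symm x, y⟫_𝕜 = ⟪e.symm x, e (e.symm y)⟫_𝕜 := by rw [e.apply_symm_apply]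
    _ = ⟪e (e.symm x), e.symm y⟫_𝕜 := (he _ _).symm
    _ = ⟪x, e.symm y⟫_𝕜 := by rw [e.apply_symm_apply]

section

open LinearPMap ContinuousLinearEquiv

variable {H : Type*} [NormedAddCommGroup H] [InnerProductSpace ℂ H] {Ω : H ≃L[ℂ] H}

lemma conjOp_apply (T : H →ₗ.[ℂ] H) (x : (conjOp Ω T).domain) :
    conjOp Ω T x = Ω.symm (T ⟨Ω.symm x, x.2⟩) := rfl

lemma dense_conjOp_domain {T : H →ₗ.[ℂ] H} (hT : Dense (T.domain : Set H)) :
    Dense ((conjOp Ω T).domain : Set H) :=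
  hT.preimage Ω.symm.toHomeomorph.isOpenMap

lemma isFormalAdjoint_conjOp (hΩ : (Ω : H →ₗ[ℂ] H).IsSymmetric) {T T' : H →ₗ.[ℂ] H}
    (h : T.IsFormalAdjoint T') : (conjOp Ω T).IsFormalAdjoint (conjOp Ω T') := fun x y => by
  calc ⟪conjOp Ω T x, (y : H)⟫_ℂ = ⟪T ⟨Ω.symm x, x.2⟩, Ω.symm y⟫_ℂ :=
        inner_symm_apply_of_isSymmetric hΩ _ _
    _ = ⟪Ω.symm x, T' ⟨Ω.symm y, y.2⟩⟫_ℂ := h ⟨Ω.symm x, x.2⟩ ⟨Ω.symm y, y.2⟩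
    _ = ⟪(x : H), conjOp Ω T' y⟫_ℂ := inner_symm_apply_of_isSymmetric hΩ _ _

variable [CompleteSpace H]

lemma adjoint_conjOp_domain_le (hΩ : (Ω : H →ₗ[ℂ] H).IsSymmetric) {T : H →ₗ.[ℂ] H}
    (hT : Dense (T.domain : Set H)) :
    (conjOp Ω T).adjoint.domain ≤ (conjOp Ω T.adjoint).domain := by
  intro y hy
  refine mem_adjoint_domain_of_exists _ ⟨Ω ((conjOp Ω T).adjoint ⟨y, hy⟩), fun u => ?_⟩
  have hΩu : Ω u ∈ (conjOp Ω T).domain := by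
    change Ω.symm (Ω u) ∈ T.domain
    simp
  have hSΩu : conjOp Ω T ⟨Ω u, hΩu⟩ = Ω.symm (T u) := by
    rw [conjOp_apply]
    congr 2
    exact Subtype.ext (Ω.symm_apply_apply _)
  calc ⟪Ω ((conjOp Ω T).adjoint ⟨y, hy⟩), (u : H)⟫_ℂ
      = ⟪(conjOp Ω T).adjoint ⟨y, hy⟩, Ω u⟫_ℂ := hΩ _ _
    _ = ⟪y, conjOp Ω T ⟨Ω u, hΩu⟩⟫_ℂ :=
        adjoint_isFormalAdjoint (dense_conjOp_domain hT) ⟨y, hy⟩ ⟨Ω u, hΩu⟩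
    _ = ⟪Ω.symm y, T u⟫_ℂ := by
        rw [hSΩu, inner_symm_apply_of_isSymmetric hΩ]

theorem adjoint_conjOp (hΩ : (Ω : H →ₗ[ℂ] H).IsSymmetric) {T : H →ₗ.[ℂ] H}
    (hT : Dense (T.domain : Set H)) : (conjOp Ω T).adjoint = conjOp Ω T.adjoint := by
  have hle : conjOp Ω T.adjoint ≤ (conjOp Ω T).adjoint :=
    (isFormalAdjoint_conjOp hΩ (adjoint_isFormalAdjoint hT).symm).le_adjoint
      (dense_conjOp_domain hT)
  exact (eq_of_le_of_domain_eq hle (le_antisymm hle.1 (adjoint_conjOp_domain_le hΩ hT))).symm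

end

theorem stmt5 {H : Type*} [NormedAddCommGroup H] [InnerProductSpace ℂ H] [CompleteSpace H]
    (Ω : H ≃L[ℂ] H) (hΩ : ((Ω : H →L[ℂ] H)).IsPositive)
    (T : H →ₗ.[ℂ] H) (hT : Dense (T.domain : Set H))
    (hsa : T.adjoint = T) :
    (conjOp Ω T).adjoint = conjOp Ω T := by
  rw [adjoint_conjOp hΩ.isSymmetric hT, hsa]
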